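/- arXiv:2211.01623 — 6 statements merged into one kernel-verified Lean document; each statement's English description precedes it below -/
import Mathlib

section
/- Let X be a complex Banach space, T a bounded linear operator on X, and x_0 ∈ X a convex-cyclic vector for T. Then for every ε > 0, every N_0 ∈ ℕ, and every x ∈ X, there exists a convex polynomial P(t) = a_0 + a_1 t + ⋯ + a_k t^k with a_k > 0 and k > N_0 such that ‖P(T)(x_0) − x‖ < ε. -/
/-! A point `y` of the convex hull close to `x` is a finite convex combination of the `Tⁱ x₀`,
with indices below some `m`. For `k > max N₀ m` and small `δ > 0`, the convex combination
`(1 - δ) y + δ Tᵏ x₀` still lies close to `x`, and its top coefficient is at least `δ > 0`. -/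

open Filter Set Finset Topology

theorem exists_weights_eventually_sum_range_of_mem_convexHull_range {E : Type*}
    [AddCommGroup E] [Module ℝ E] {f : ℕ → E} {y : E} (hy : y ∈ convexHull ℝ (range f)) :
    ∃ b : ℕ → ℝ, (∀ i, 0 ≤ b i) ∧
      ∀ᶠ n in atTop, ∑ i ∈ range n, b i = 1 ∧ ∑ i ∈ range n, b i • f i = y := by
  rw [convexHull_range_eq_exists_affineCombination] at hy
  obtain ⟨s, w, hw₀, hw₁, rfl⟩ := hy
  refine ⟨(s : Set ℕ).indicator w, indicator_nonneg hw₀, ?_⟩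
  filter_upwards [tendsto_finset_range.eventually (eventually_ge_atTop s)] with n hsn
  refine ⟨by rwa [sum_indicator_subset _ hsn], ?_⟩
  simp_rw [← indicator_smul_apply_left, sum_indicator_subset _ hsn,
    affineCombination_eq_linear_combination _ _ _ hw₁]

theorem exists_convex_weights_top_pos_mem_nhds {E : Type*} [NormedAddCommGroup E]
    [NormedSpace ℝ E] {f : ℕ → E} {y : E} (hy : y ∈ convexHull ℝ (range f)) (N₀ : ℕ)
    {U : Set E} (hU : U ∈ 𝓝 y) :
    ∃ (k : ℕ) (a : ℕ → ℝ), N₀ < k ∧ (∀ i, 0 ≤ a i) ∧ ∑ i ∈ range (k + 1), a i = 1 ∧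
      0 < a k ∧ ∑ i ∈ range (k + 1), a i • f i ∈ U := by
  obtain ⟨b, hb₀, hb⟩ := exists_weights_eventually_sum_range_of_mem_convexHull_range hy
  obtain ⟨k, hkN, hb₁, hby⟩ :=
    ((eventually_gt_atTop N₀).and ((tendsto_add_atTop_nat 1).eventually hb)).exists
  have hmix : Tendsto (fun δ : ℝ => (1 - δ) • y + δ • f k) (𝓝[>] 0) (𝓝 y) := by
    refine tendsto_nhdsWithin_of_tendsto_nhds (Continuous.tendsto' ?_ _ _ (by simp))
    fun_prop
  obtain ⟨δ, hδU, hδ₀, hδ₁⟩ := ((hmix.eventually hU).and (Ioo_mem_nhdsGT one_pos)).exists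
  set a : ℕ → ℝ := fun i => (1 - δ) * b i + if i = k then δ else 0
  have ha_nonneg (i : ℕ) : 0 ≤ a i :=
    add_nonneg (mul_nonneg (by linarith) (hb₀ i)) (by split_ifs <;> positivity)
  refine ⟨k, a, hkN, ha_nonneg, ?_, ?_, ?_⟩
  · simp [a, sum_add_distrib, ← mul_sum, hb₁]
  · simpa [a] using add_pos_of_nonneg_of_pos (mul_nonneg (by linarith) (hb₀ k)) hδ₀
  · have ha_sum : ∑ i ∈ range (k + 1), a i • f i = (1 - δ) • y + δ • f k := by
      simp [a, add_smul, mul_smul, sum_add_distrib, ← smul_sum, hby]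
    exact ha_sum ▸ hδU

theorem stmt_4_general {X : Type*} [NormedAddCommGroup X] [NormedSpace ℂ X]
    (T : X →L[ℂ] X) (x₀ : X)
    (hx₀ : Dense (convexHull ℝ (Set.range fun n : ℕ => (T ^ n) x₀)))
    (ε : ℝ) (hε : 0 < ε) (N₀ : ℕ) (x : X) :
    ∃ (k : ℕ) (a : ℕ → ℝ), N₀ < k ∧ (∀ i, 0 ≤ a i) ∧
      (∑ i ∈ Finset.range (k + 1), a i = 1) ∧ 0 < a k ∧
      ‖(∑ i ∈ Finset.range (k + 1), (a i : ℂ) • (T ^ i)) x₀ - x‖ < ε := by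
  obtain ⟨y, hy, hyx⟩ := hx₀.exists_mem_open Metric.isOpen_ball ⟨x, Metric.mem_ball_self hε⟩
  obtain ⟨k, a, hkN, ha₀, ha₁, hak, hax⟩ :=
    exists_convex_weights_top_pos_mem_nhds hy N₀ (Metric.isOpen_ball.mem_nhds hyx)
  refine ⟨k, a, hkN, ha₀, ha₁, hak, ?_⟩
  simpa [← dist_eq_norm, Complex.coe_smul] using hax

/-- Lemma 2.2 of the paper. If `x₀` is a convex-cyclic vector for a
bounded operator `T` on a complex Banach space `X`, then for every `ε > 0`, `N₀ ∈ ℕ` and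
`x ∈ X` there is a convex polynomial `P(t) = a₀ + a₁ t + ⋯ + a_k t^k` with `a_k > 0` and
`k > N₀` such that `‖P(T)(x₀) - x‖ < ε`. -/
theorem stmt_4 {X : Type*} [NormedAddCommGroup X] [NormedSpace ℂ X] [CompleteSpace X]
    (T : X →L[ℂ] X) (x₀ : X)
    (hx₀ : Dense (convexHull ℝ (Set.range fun n : ℕ => (T ^ n) x₀)))
    (ε : ℝ) (hε : 0 < ε) (N₀ : ℕ) (x : X) :
    ∃ (k : ℕ) (a : ℕ → ℝ), N₀ < k ∧ (∀ i, 0 ≤ a i) ∧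
      (∑ i ∈ Finset.range (k + 1), a i = 1) ∧ 0 < a k ∧
      ‖(∑ i ∈ Finset.range (k + 1), (a i : ℂ) • (T ^ i)) x₀ - x‖ < ε :=
  stmt_4_general T x₀ hx₀ ε hε N₀ x
end

section
/- Let G be a second countable locally compact Hausdorff topological group with a right Haar measure ϑ, let 1 ≤ p < ∞, let g ∈ G and let w be a weight on G such that 1/w is also bounded. If liminf_{k→∞} ‖k (∏_{i=0}^{k−1} (w ∗ δ_{g^{i}}))^{−1}‖_∞ = 0, then the operator I − T_{g,w} on L^p(G, ϑ) is injective, i.e. the only f ∈ L^p(G, ϑ) with T_{g,w} f = f is f = 0. -/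
open MeasureTheory Filter
open scoped ENNReal

/-!
If `T_{g,w} f = f`, iterating the fixed-point equation `k` times gives
`f x = (∏_{i<k} w (x g⁻ⁱ)) f (x g⁻ᵏ)` almost everywhere. The liminf hypothesis supplies a
`k ≥ 2` whose product is at least `k` almost everywhere, so `k ‖f‖_p ≤ ‖f‖_p` by right
invariance of the Haar measure, which forces `f = 0`.
-/

section RightTranslation

variable {G : Type*} [Group G] [MeasurableSpace G] [MeasurableMul G]
  {μ : Measure G} [μ.IsMulRightInvariant]

theorem ae_eq_prod_mul_comp_pow_of_ae_eq_mul_comp {R : Type*} [CommMonoid R]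
    {f w : G → R} {g : G} (hfix : f =ᵐ[μ] fun x => w x * f (x * g⁻¹)) (k : ℕ) :
    ∀ᵐ x ∂μ, f x = (∏ i ∈ Finset.range k, w (x * (g ^ i)⁻¹)) * f (x * (g ^ k)⁻¹) := by
  induction k with
  | zero => filter_upwards with x; simp
  | succ k ih =>
    have hshift :
        ∀ᵐ x ∂μ, f (x * (g ^ k)⁻¹) = w (x * (g ^ k)⁻¹) * f (x * (g ^ k)⁻¹ * g⁻¹) :=
      (measurePreserving_mul_right μ (g ^ k)⁻¹).quasiMeasurePreserving.ae hfix
    filter_upwards [ih, hshift] with x hx hxk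
    rw [hx, hxk, Finset.prod_range_succ, mul_assoc, mul_assoc, ← mul_inv_rev, ← pow_succ']

theorem Lp.eq_zero_of_ae_norm_comp_mul_right_le_mul {E : Type*} [NormedAddCommGroup E]
    {p : ℝ≥0∞} (hp : 0 < p) {f : Lp E p μ} {h : G} {c : ℝ} (hc : c < 1)
    (hf : ∀ᵐ x ∂μ, ‖f (x * h)‖ ≤ c * ‖f x‖) : f = 0 := by
  have hN_le : eLpNorm f p μ ≤ ENNReal.ofReal c * eLpNorm f p μ :=
    calc eLpNorm f p μ = eLpNorm ((f : G → E) ∘ (· * h)) p μ :=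
          (eLpNorm_comp_measurePreserving (Lp.aestronglyMeasurable f)
            (measurePreserving_mul_right μ h)).symm
      _ ≤ ENNReal.ofReal c * eLpNorm f p μ := eLpNorm_le_mul_eLpNorm_of_ae_le_mul hf p
  have hN : eLpNorm f p μ = 0 := by
    by_contra hN0
    refine hN_le.not_gt ?_
    simpa using (ENNReal.mul_lt_mul_iff_left hN0 (Lp.eLpNorm_ne_top f)).2
      (ENNReal.ofReal_lt_one.2 hc)
  rw [← Lp.norm_eq_zero_iff hp, Lp.norm_def, hN, ENNReal.toReal_zero]

end RightTranslation

theorem ae_le_of_eLpNorm_top_mul_inv_lt_one {α : Type*} [MeasurableSpace α] {μ : Measure α}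
    {c : ℝ} {P : α → ℝ} (hP : ∀ x, 0 < P x)
    (h : eLpNorm (fun x => c * (P x)⁻¹) ∞ μ < 1) : ∀ᵐ x ∂μ, c ≤ P x := by
  rw [eLpNorm_exponent_top] at h
  filter_upwards [ae_le_eLpNormEssSup (f := fun x => c * (P x)⁻¹) (μ := μ)] with x hx
  have hlt := hx.trans_lt h
  rw [Real.enorm_eq_ofReal_abs, ENNReal.ofReal_lt_one] at hlt
  have := (abs_lt.mp hlt).2
  rw [mul_inv_lt_iff₀ (hP x), one_mul] at this
  exact this.le

theorem stmt_7_general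
    {G : Type*} [Group G] [TopologicalSpace G] [IsTopologicalGroup G]
    [MeasurableSpace G] [BorelSpace G]
    (ϑ : Measure G) [ϑ.IsMulRightInvariant]
    (p : ℝ≥0∞) [Fact (1 ≤ p)]
    (g : G)
    (w : G → ℝ) (hw_pos : ∀ x, 0 < w x)
    (T : Lp ℂ p ϑ →L[ℂ] Lp ℂ p ϑ)
    (hT : ∀ f : Lp ℂ p ϑ, (T f : G → ℂ) =ᵐ[ϑ] fun x => (w x : ℂ) * f (x * g⁻¹))
    (h2 : Filter.liminf (fun k : ℕ =>
      eLpNorm (fun x : G => (k : ℝ) * (∏ i ∈ Finset.range k, w (x * (g ^ i)⁻¹))⁻¹) ∞ ϑ)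
      Filter.atTop = 0) :
    ∀ f : Lp ℂ p ϑ, T f = f → f = 0 := by
  intro f hf
  have hfreq : ∃ᶠ k : ℕ in atTop, eLpNorm
      (fun x : G => (k : ℝ) * (∏ i ∈ Finset.range k, w (x * (g ^ i)⁻¹))⁻¹) ∞ ϑ < 1 :=
    frequently_lt_of_liminf_lt (by isBoundedDefault) (h2 ▸ zero_lt_one)
  obtain ⟨k, hk, hk2⟩ := (hfreq.and_eventually (eventually_ge_atTop 2)).exists
  have hprod := ae_le_of_eLpNorm_top_mul_inv_lt_one
    (fun x => Finset.prod_pos fun i _ => hw_pos (x * (g ^ i)⁻¹)) hk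
  have hiter := ae_eq_prod_mul_comp_pow_of_ae_eq_mul_comp (hf ▸ hT f) k
  have hk_inv : (k : ℝ)⁻¹ < 1 := inv_lt_one_of_one_lt₀ (by exact_mod_cast hk2)
  refine Lp.eq_zero_of_ae_norm_comp_mul_right_le_mul (zero_lt_one.trans_le Fact.out)
    (h := (g ^ k)⁻¹) hk_inv ?_
  filter_upwards [hiter, hprod] with x hx hPx
  rw [hx, norm_mul, ← Complex.ofReal_prod, Complex.norm_real, Real.norm_eq_abs,
    abs_of_pos (Finset.prod_pos fun i _ => hw_pos _), le_inv_mul_iff₀ (by positivity)]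
  gcongr

/-- Let `w` be a weight with `1/w` bounded. If
`liminf_k ‖k (∏_{i=0}^{k-1} (w ∗ δ_{g^i}))⁻¹‖_∞ = 0`, then `I - T_{g,w}` is injective
on `L^p(G,ϑ)`: the only `f` with `T_{g,w} f = f` is `f = 0`. -/
theorem stmt_7
    {G : Type*} [Group G] [TopologicalSpace G] [IsTopologicalGroup G] [T2Space G]
    [LocallyCompactSpace G] [SecondCountableTopology G]
    [MeasurableSpace G] [BorelSpace G]
    (ϑ : Measure G) [ϑ.IsMulRightInvariant] [ϑ.Regular] [ϑ.IsOpenPosMeasure]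
    (p : ℝ≥0∞) [Fact (1 ≤ p)] (hp : p ≠ ∞)
    (g : G)
    (w : G → ℝ) (hw_meas : Measurable w) (hw_pos : ∀ x, 0 < w x)
    (hw_bdd : ∃ C : ℝ, ∀ x, w x ≤ C)
    (hw_inv_bdd : ∃ C : ℝ, ∀ x, (w x)⁻¹ ≤ C)
    (T : Lp ℂ p ϑ →L[ℂ] Lp ℂ p ϑ)
    (hT : ∀ f : Lp ℂ p ϑ, (T f : G → ℂ) =ᵐ[ϑ] fun x => (w x : ℂ) * f (x * g⁻¹))
    (h2 : Filter.liminf (fun k : ℕ =>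
      eLpNorm (fun x : G => (k : ℝ) * (∏ i ∈ Finset.range k, w (x * (g ^ i)⁻¹))⁻¹) ∞ ϑ)
      Filter.atTop = 0) :
    ∀ f : Lp ℂ p ϑ, T f = f → f = 0 :=
  stmt_7_general ϑ p g w hw_pos T hT h2
end

section
/- Let G be a second countable locally compact Hausdorff topological group with a right Haar measure ϑ, let 1 ≤ p < ∞, let g ∈ G, let β > 1 be a scalar, and let w be a weight on G such that 1/w is also bounded. If liminf_{k→∞} ‖β^{k} (∏_{i=0}^{k−1} (w ∗ δ_{g^{i}}))^{−1}‖_∞ = 0, then the operator βI − T_{g,w} on L^p(G, ϑ) is injective, i.e. the only f ∈ L^p(G, ϑ) with T_{g,w} f = β f is f = 0. -/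
open MeasureTheory Filter Finset
open scoped ENNReal

/-!
Iterating the eigenvalue equation `w(x) f(x g⁻¹) = β f(x)` gives
`f(x g⁻ᵏ) = β^k (∏_{i<k} w(x g⁻ⁱ))⁻¹ f(x)` almost everywhere. Since right translation preserves
the `Lᵖ` norm, `‖f‖_p ≤ ‖β^k (∏_{i<k} w ∗ δ_{gⁱ})⁻¹‖_∞ ‖f‖_p` for every `k`, and the liminf
hypothesis supplies a `k` for which the factor is `< 1`, forcing `‖f‖_p = 0`.
-/

theorem ENNReal.eq_zero_of_le_mul_of_lt_one {a c : ℝ≥0∞} (ha : a ≠ ∞) (hc : c < 1)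
    (h : a ≤ c * a) : a = 0 := by
  by_contra ha0
  have hlt : c * a < a := by simpa [mul_comm] using ENNReal.mul_lt_mul_right ha0 ha hc
  exact (h.trans_lt hlt).false

section RightTranslation

variable {G : Type*} [Group G] [MeasurableSpace G] [MeasurableMul G] {μ : Measure G}
  [μ.IsMulRightInvariant]

theorem ae_prod_smul_comp_mul_inv_pow {M X : Type*} [CommMonoid M] [MulAction M X]
    {w : G → M} {F : G → X} {β : M} {g : G} (h : ∀ᵐ x ∂μ, w x • F (x * g⁻¹) = β • F x)
    (k : ℕ) :
    ∀ᵐ x ∂μ, (∏ i ∈ range k, w (x * (g ^ i)⁻¹)) • F (x * (g ^ k)⁻¹) = β ^ k • F x := by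
  induction k with
  | zero => simp
  | succ k ih =>
    have ih' := (measurePreserving_mul_right μ g⁻¹).quasiMeasurePreserving.ae ih
    filter_upwards [ih', h] with x hk hx
    have hshift : ∀ i : ℕ, x * g⁻¹ * (g ^ i)⁻¹ = x * (g ^ (i + 1))⁻¹ := fun i => by
      rw [pow_succ, mul_inv_rev, mul_assoc]
    simp only [hshift] at hk
    rw [prod_range_succ', pow_zero, inv_one, mul_one, mul_comm, mul_smul, hk, smul_comm, hx,
      pow_succ, mul_smul]

theorem ae_comp_mul_inv_pow_eq_smul {K E : Type*} [Field K] [AddCommGroup E] [Module K E]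
    {w : G → K} (hw : ∀ x, w x ≠ 0) {F : G → E} {β : K} {g : G}
    (h : ∀ᵐ x ∂μ, w x • F (x * g⁻¹) = β • F x) (k : ℕ) :
    (fun x => F (x * (g ^ k)⁻¹))
      =ᵐ[μ] (fun x => β ^ k * (∏ i ∈ range k, w (x * (g ^ i)⁻¹))⁻¹) • F := by
  filter_upwards [ae_prod_smul_comp_mul_inv_pow h k] with x hx
  have hprod : ∏ i ∈ range k, w (x * (g ^ i)⁻¹) ≠ 0 := prod_ne_zero_iff.mpr fun i _ => hw _
  rw [Pi.smul_apply', mul_comm, mul_smul, ← hx, inv_smul_smul₀ hprod]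

theorem eLpNorm_le_eLpNorm_top_mul_of_comp_mul_right_ae_eq {𝕜 E : Type*} [NormedRing 𝕜]
    [NormedAddCommGroup E] [MulActionWithZero 𝕜 E] [IsBoundedSMul 𝕜 E] {F : G → E}
    (hF : AEStronglyMeasurable F μ) {φ : G → 𝕜} {h : G}
    (hφ : (fun x => F (x * h)) =ᵐ[μ] φ • F) (p : ℝ≥0∞) :
    eLpNorm F p μ ≤ eLpNorm φ ∞ μ * eLpNorm F p μ :=
  calc eLpNorm F p μ = eLpNorm (fun x => F (x * h)) p μ :=
        (eLpNorm_comp_measurePreserving hF (measurePreserving_mul_right μ h)).symm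
    _ = eLpNorm (φ • F) p μ := eLpNorm_congr_ae hφ
    _ ≤ eLpNorm φ ∞ μ * eLpNorm F p μ := eLpNorm_smul_le_eLpNorm_top_mul_eLpNorm p hF φ

end RightTranslation

theorem stmt_8_general
    {G : Type*} [Group G] [TopologicalSpace G] [IsTopologicalGroup G]
    [MeasurableSpace G] [BorelSpace G]
    (ϑ : Measure G) [ϑ.IsMulRightInvariant]
    (p : ℝ≥0∞) [Fact (1 ≤ p)]
    (g : G) (β : ℝ)
    (w : G → ℝ) (hw_pos : ∀ x, 0 < w x)
    (T : Lp ℂ p ϑ →L[ℂ] Lp ℂ p ϑ)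
    (hT : ∀ f : Lp ℂ p ϑ, (T f : G → ℂ) =ᵐ[ϑ] fun x => (w x : ℂ) * f (x * g⁻¹))
    (h2 : Filter.liminf (fun k : ℕ =>
      eLpNorm (fun x : G => β ^ (k : ℤ) * (∏ i ∈ Finset.range k, w (x * (g ^ i)⁻¹))⁻¹) ∞ ϑ)
      Filter.atTop = 0) :
    ∀ f : Lp ℂ p ϑ, T f = (β : ℂ) • f → f = 0 := by
  intro f hf
  have heig : ∀ᵐ x ∂ϑ, w x • f (x * g⁻¹) = β • f x := by
    filter_upwards [hf ▸ hT f, Lp.coeFn_smul (β : ℂ) f] with x hTx hβx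
    rw [Complex.real_smul, Complex.real_smul, ← hTx, hβx, Pi.smul_apply, smul_eq_mul]
  obtain ⟨k, hk⟩ := (frequently_lt_of_liminf_lt (b := 1) (by isBoundedDefault)
    (h2 ▸ zero_lt_one)).exists
  simp only [zpow_natCast] at hk
  have hle := eLpNorm_le_eLpNorm_top_mul_of_comp_mul_right_ae_eq (Lp.aestronglyMeasurable f)
    (ae_comp_mul_inv_pow_eq_smul (fun x => (hw_pos x).ne') heig k) p
  have hzero := ENNReal.eq_zero_of_le_mul_of_lt_one (Lp.eLpNorm_ne_top f) hk hle
  exact norm_eq_zero.mp (by rw [Lp.norm_def, hzero, ENNReal.toReal_zero])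

/-- Let `β > 1` and `w` a weight with `1/w` bounded. If
`liminf_k ‖β^k (∏_{i=0}^{k-1} (w ∗ δ_{g^i}))⁻¹‖_∞ = 0`, then `βI - T_{g,w}` is injective
on `L^p(G,ϑ)`: the only `f` with `T_{g,w} f = β f` is `f = 0`. -/
theorem stmt_8
    {G : Type*} [Group G] [TopologicalSpace G] [IsTopologicalGroup G] [T2Space G]
    [LocallyCompactSpace G] [SecondCountableTopology G]
    [MeasurableSpace G] [BorelSpace G]
    (ϑ : Measure G) [ϑ.IsMulRightInvariant] [ϑ.Regular] [ϑ.IsOpenPosMeasure]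
    (p : ℝ≥0∞) [Fact (1 ≤ p)] (hp : p ≠ ∞)
    (g : G) (β : ℝ) (hβ : 1 < β)
    (w : G → ℝ) (hw_meas : Measurable w) (hw_pos : ∀ x, 0 < w x)
    (hw_bdd : ∃ C : ℝ, ∀ x, w x ≤ C)
    (hw_inv_bdd : ∃ C : ℝ, ∀ x, (w x)⁻¹ ≤ C)
    (T : Lp ℂ p ϑ →L[ℂ] Lp ℂ p ϑ)
    (hT : ∀ f : Lp ℂ p ϑ, (T f : G → ℂ) =ᵐ[ϑ] fun x => (w x : ℂ) * f (x * g⁻¹))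
    (h2 : Filter.liminf (fun k : ℕ =>
      eLpNorm (fun x : G => β ^ (k : ℤ) * (∏ i ∈ Finset.range k, w (x * (g ^ i)⁻¹))⁻¹) ∞ ϑ)
      Filter.atTop = 0) :
    ∀ f : Lp ℂ p ϑ, T f = (β : ℂ) • f → f = 0 :=
  stmt_8_general ϑ p g β w hw_pos T hT h2
end

section
/- Let G = ℝ be the additive group of real numbers with Lebesgue measure, let 1 ≤ p < ∞, let g < 0 be a fixed negative real number, and let 1 < s < t be real numbers. Define the weight w : ℝ → (0,∞) by w(x) = t for x ≥ 1, w(x) = −x/2 + 1 for −1 < x < 1, and w(x) = s for x ≤ −1. Then the weighted translation operator T_{g,w} on L^p(ℝ), given by (T_{g,w} f)(x) = w(x) f(x − g), is convex-cyclic. -/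
/-!
A Baire category argument shows that `T` is convex-cyclic as soon as for all `u, v` in a dense
set there are `λₖ → 0⁺`, `xₖ → 0` and exponents `Nₖ` with `λₖ T^Nₖ u → 0` and
`λₖ T^Nₖ xₖ = v - u`: the point `(1 - λₖ) (u + xₖ) + λₖ T^Nₖ (u + xₖ)` of the segment from
`u + xₖ` to its `Nₖ`-th iterate then tends to `v`.

For the weighted translation, `T^n f (x) = W_n(x) f(x - n g)` with `W_n(x) = ∏_{k<n} w(x - k g)`.
Take `u, v` supported in `[-M, M]` and `K (-g) ≥ M + 1`. Since `g < 0`, all but the first `K`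
factors of `W_{K+m}(x)` equal `t` for `x ∈ [-M, M]`, where `T^{K+m}` has to be inverted to
produce `xₖ`, and all but the last `K` equal `s` where `x - (K+m) g ∈ [-M, M]`, which is where
`T^{K+m} u` lives. With `λ = ρ^{-(K+m)}` for `max(s, 1) < ρ < t` all error terms decay
geometrically.
-/

open MeasureTheory Filter Topology Set
open scoped ENNReal

def IsConvexCyclic {𝕜 E : Type*} [Semiring 𝕜] [AddCommMonoid E] [Module 𝕜 E] [Module ℝ E]
    [TopologicalSpace E] (T : E →L[𝕜] E) : Prop :=
  ∃ f, Dense (convexHull ℝ (range fun n : ℕ => (T ^ n) f))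

namespace IsConvexCyclic

variable {𝕜 E : Type*} [Semiring 𝕜] [AddCommGroup E] [Module 𝕜 E] [Module ℝ E]
  [TopologicalSpace E] [IsTopologicalAddGroup E] [ContinuousSMul ℝ E]
  [BaireSpace E] [SecondCountableTopology E]

theorem of_segment_transitive (T : E →L[𝕜] E)
    (hT : ∀ U V : Set E, IsOpen U → U.Nonempty → IsOpen V → V.Nonempty →
      ∃ f ∈ U, ∃ n : ℕ, (segment ℝ f ((T ^ n) f) ∩ V).Nonempty) :
    IsConvexCyclic T := by
  set O : Set E → Set E := fun V => ⋃ (n : ℕ) (θ ∈ Icc (0 : ℝ) 1),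
    (fun f => (1 - θ) • f + θ • (T ^ n) f) ⁻¹' V
  have mem_O : ∀ V f, f ∈ O V ↔ ∃ n : ℕ, (segment ℝ f ((T ^ n) f) ∩ V).Nonempty := by
    simp only [O, segment_eq_image, mem_iUnion, mem_preimage, exists_prop, Set.Nonempty,
      mem_inter_iff, mem_image, exists_exists_and_eq_and, implies_true]
  obtain ⟨B, hB_count, hB_empty, hB⟩ := TopologicalSpace.exists_countable_basis E
  have hdense : Dense (⋂ V ∈ B, O V) := by
    refine dense_biInter_of_isOpen (fun V hV => ?_) hB_count fun V hV => ?_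
    · exact isOpen_iUnion fun n => isOpen_biUnion fun θ _ => (hB.isOpen hV).preimage (by fun_prop)
    · refine dense_iff_inter_open.2 fun U hU hU_ne => ?_
      obtain ⟨f, hfU, hfV⟩ := hT U V hU hU_ne (hB.isOpen hV)
        (nonempty_iff_ne_empty.2 fun h => hB_empty (h ▸ hV))
      exact ⟨f, hfU, (mem_O V f).2 hfV⟩
  obtain ⟨f, hf⟩ := hdense.nonempty
  refine ⟨f, hB.dense_iff.2 fun V hV _ => ?_⟩
  obtain ⟨n, x, hx_seg, hxV⟩ := (mem_O V f).1 (mem_iInter₂.1 hf V hV)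
  have h0 : f ∈ range fun n : ℕ => (T ^ n) f := ⟨0, by simp⟩
  exact ⟨x, hxV, segment_subset_convexHull h0 ⟨n, rfl⟩ hx_seg⟩

theorem of_criterion (T : E →L[𝕜] E) {D : Set E} (hD : Dense D)
    (hTD : ∀ u ∈ D, ∀ v ∈ D, ∃ (N : ℕ → ℕ) (l : ℕ → ℝ) (x : ℕ → E), (∀ k, 0 ≤ l k) ∧
      Tendsto l atTop (𝓝 0) ∧ Tendsto x atTop (𝓝 0) ∧
      Tendsto (fun k => l k • (T ^ N k) u) atTop (𝓝 0) ∧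
      ∀ k, l k • (T ^ N k) (x k) = v - u) :
    IsConvexCyclic T := by
  refine of_segment_transitive T fun U V hU hU_ne hV hV_ne => ?_
  obtain ⟨u, huU, huD⟩ := hD.inter_open_nonempty U hU hU_ne
  obtain ⟨v, hvV, hvD⟩ := hD.inter_open_nonempty V hV hV_ne
  obtain ⟨N, l, x, hl_nonneg, hl, hx, hTu, hTx⟩ := hTD u huD v hvD
  have hf : Tendsto (fun k => u + x k) atTop (𝓝 u) := by
    simpa using tendsto_const_nhds.add hx
  have hcomb : Tendsto (fun k => (1 - l k) • (u + x k) + l k • (T ^ N k) (u + x k)) atTop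
      (𝓝 v) := by
    have key : ∀ k, (1 - l k) • (u + x k) + l k • (T ^ N k) (u + x k)
        = (1 - l k) • (u + x k) + l k • (T ^ N k) u + (v - u) := fun k => by
      rw [map_add, smul_add (l k), hTx, add_assoc]
    have := ((((tendsto_const_nhds (x := (1 : ℝ))).sub hl).smul hf).add hTu).add
      (tendsto_const_nhds (x := v - u))
    simpa only [key, sub_zero, one_smul, add_zero, add_sub_cancel] using this
  obtain ⟨k, hkU, hkV, hk1⟩ := ((hf.eventually (hU.mem_nhds huU)).and
    ((hcomb.eventually (hV.mem_nhds hvV)).and (hl.eventually (gt_mem_nhds one_pos)))).exists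
  exact ⟨u + x k, hkU, N k, _, ⟨1 - l k, l k, by linarith, hl_nonneg k, by ring, rfl⟩, hkV⟩

end IsConvexCyclic

lemma dense_setOf_ae_eq_zero_of_notMem_Icc {E : Type*} [NormedAddCommGroup E] [NormedSpace ℝ E]
    {p : ℝ≥0∞} [Fact (1 ≤ p)] (hp : p ≠ ∞) :
    Dense {u : Lp E p (volume : Measure ℝ) | ∃ M, ∀ᵐ x, x ∉ Icc (-M) M → u x = 0} := by
  refine Metric.dense_iff.2 fun f ε hε => ?_
  obtain ⟨φ, hφ_supp, hφ_le, -, hφ⟩ := (Lp.memLp f).exists_hasCompactSupport_eLpNorm_sub_le hp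
    (ENNReal.ofReal_pos.2 (half_pos hε)).ne'
  obtain ⟨M, hM⟩ := hφ_supp.isCompact.isBounded.subset_closedBall 0
  refine ⟨hφ.toLp φ, ?_, M, ?_⟩
  · have hdist : dist f (hφ.toLp φ) ≤ ε / 2 := by
      rw [Lp.dist_def, eLpNorm_congr_ae ((ae_eq_refl _).sub hφ.coeFn_toLp)]
      exact ENNReal.toReal_le_of_le_ofReal (half_pos hε).le hφ_le
    rw [Metric.mem_ball, dist_comm]
    linarith
  · filter_upwards [hφ.coeFn_toLp] with x hx hxM
    rw [hx]
    refine image_eq_zero_of_notMem_tsupport fun hx_supp => hxM ?_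
    simpa [Real.closedBall_eq_Icc] using hM hx_supp

lemma pow_mul_pow_le_prod_range_add {v : ℕ → ℝ} {a b : ℝ} {K m : ℕ} (ha : 0 ≤ a) (hb : 0 ≤ b)
    (hva : ∀ k < K, a ≤ v k) (hvb : ∀ k < m, b ≤ v (K + k)) :
    a ^ K * b ^ m ≤ ∏ k ∈ Finset.range (K + m), v k := by
  rw [Finset.prod_range_add]
  refine mul_le_mul ?_ ?_ (by positivity) ?_
  · simpa using Finset.prod_le_prod (fun _ _ => ha) fun k hk => hva k (Finset.mem_range.1 hk)
  · simpa using Finset.prod_le_prod (fun _ _ => hb) fun k hk => hvb k (Finset.mem_range.1 hk)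
  · exact Finset.prod_nonneg fun k hk => ha.trans (hva k (Finset.mem_range.1 hk))

lemma prod_range_add_le_pow_mul_pow {v : ℕ → ℝ} {a b : ℝ} {K m : ℕ} (hv : ∀ k, 0 ≤ v k)
    (hva : ∀ k < m, v k ≤ a) (hvb : ∀ k < K, v (m + k) ≤ b) :
    ∏ k ∈ Finset.range (K + m), v k ≤ a ^ m * b ^ K := by
  have ha : 0 ≤ a ^ m := by
    rcases m.eq_zero_or_pos with rfl | hm
    · simp
    · exact pow_nonneg ((hv 0).trans (hva 0 hm)) m
  rw [add_comm, Finset.prod_range_add]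
  refine mul_le_mul ?_ ?_ (Finset.prod_nonneg fun k _ => hv _) ha
  · simpa using Finset.prod_le_prod (fun _ _ => hv _) fun k hk => hva k (Finset.mem_range.1 hk)
  · simpa using Finset.prod_le_prod (fun _ _ => hv _) fun k hk => hvb k (Finset.mem_range.1 hk)

def weightProd (w : ℝ → ℝ) (g : ℝ) (n : ℕ) (x : ℝ) : ℝ :=
  ∏ k ∈ Finset.range n, w (x - k * g)

lemma weightProd_succ (w : ℝ → ℝ) (g : ℝ) (n : ℕ) (x : ℝ) :
    weightProd w g (n + 1) x = w x * weightProd w g n (x - g) := by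
  rw [weightProd, Finset.prod_range_succ', mul_comm]
  congr 1
  · simp
  · refine Finset.prod_congr rfl fun k _ => ?_
    push_cast
    ring_nf

lemma measurable_weightProd {w : ℝ → ℝ} (hw : Measurable w) (g : ℝ) (n : ℕ) :
    Measurable (weightProd w g n) :=
  Finset.measurable_prod _ fun _ _ => hw.comp (measurable_sub_const _)

def IsWeightedTranslation {p : ℝ≥0∞} [Fact (1 ≤ p)]
    (T : Lp ℂ p (volume : Measure ℝ) →L[ℂ] Lp ℂ p (volume : Measure ℝ)) (g : ℝ) (w : ℝ → ℝ) :
    Prop :=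
  ∀ f : Lp ℂ p volume, (T f : ℝ → ℂ) =ᵐ[volume] fun x => (w x : ℂ) * f (x - g)

namespace IsWeightedTranslation

variable {p : ℝ≥0∞} [Fact (1 ≤ p)] {g : ℝ} {w : ℝ → ℝ}
  {T : Lp ℂ p (volume : Measure ℝ) →L[ℂ] Lp ℂ p (volume : Measure ℝ)}

lemma pow_ae_eq (hT : IsWeightedTranslation T g w) (n : ℕ) (f : Lp ℂ p volume) :
    ((T ^ n) f : ℝ → ℂ) =ᵐ[volume] fun x => (weightProd w g n x : ℂ) * f (x - n * g) := by
  induction n with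
  | zero => simp [weightProd]
  | succ n ih =>
    have ih' := (measurePreserving_sub_right volume g).quasiMeasurePreserving.ae ih
    have hpow : (T ^ (n + 1)) f = T ((T ^ n) f) := by rw [pow_succ']; rfl
    filter_upwards [hT ((T ^ n) f), ih'] with x hx hx'
    rw [hpow, hx, hx', weightProd_succ]
    push_cast
    ring_nf

lemma norm_pow_le (hT : IsWeightedTranslation T g w) (n : ℕ) {u : Lp ℂ p volume} {S : Set ℝ}
    (hu : ∀ᵐ y, y ∉ S → u y = 0) {B : ℝ} (hB : ∀ x, x - n * g ∈ S → |weightProd w g n x| ≤ B) :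
    ‖(T ^ n) u‖ ≤ B * ‖u‖ := by
  have hτ := measurePreserving_sub_right volume ((n : ℝ) * g)
  rw [← Lp.norm_compMeasurePreserving u hτ]
  refine Lp.norm_le_mul_norm_of_ae_le_mul ?_
  filter_upwards [hT.pow_ae_eq n u, Lp.coeFn_compMeasurePreserving u hτ,
    hτ.quasiMeasurePreserving.ae hu] with x hTx hτx hux
  rw [hTx, hτx, Function.comp_apply, norm_mul, Complex.norm_real, Real.norm_eq_abs]
  by_cases hx : x - n * g ∈ S
  · gcongr
    exact hB x hx
  · simp [hux hx]

lemma exists_pow_eq (hT : IsWeightedTranslation T g w) (hw : Measurable w) (n : ℕ)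
    {z : Lp ℂ p volume} {S : Set ℝ} (hz : ∀ᵐ y, y ∉ S → z y = 0) {L : ℝ} (hL : 0 < L)
    (hLW : ∀ x ∈ S, L ≤ weightProd w g n x) :
    ∃ ψ : Lp ℂ p volume, (T ^ n) ψ = z ∧ ‖ψ‖ ≤ L⁻¹ * ‖z‖ := by
  have hτ := measurePreserving_add_right volume ((n : ℝ) * g)
  obtain ⟨τz, hτz, hτz_norm⟩ : ∃ τz : Lp ℂ p volume,
      (τz : ℝ → ℂ) =ᵐ[volume] (fun y => z (y + n * g)) ∧ ‖τz‖ = ‖z‖ :=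
    ⟨_, Lp.coeFn_compMeasurePreserving z hτ, Lp.norm_compMeasurePreserving z hτ⟩
  set φ : ℝ → ℂ := fun y => ((weightProd w g n (y + n * g))⁻¹ : ℝ) * τz y
  have hφ_le : ∀ᵐ y, ‖φ y‖ ≤ L⁻¹ * ‖τz y‖ := by
    filter_upwards [hτz, hτ.quasiMeasurePreserving.ae hz] with y hτy hzy
    rw [norm_mul, Complex.norm_real, Real.norm_eq_abs]
    by_cases hy : y + n * g ∈ S
    · have hW := hLW _ hy
      rw [abs_inv, abs_of_pos (hL.trans_le hW)]
      gcongr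
    · simp [hτy, hzy hy]
  have hφ_meas : AEStronglyMeasurable φ volume :=
    ((Complex.measurable_ofReal.comp ((measurable_weightProd hw g n).comp
      (measurable_add_const _)).inv).aestronglyMeasurable).mul (Lp.aestronglyMeasurable τz)
  have hφ : MemLp φ p volume := (Lp.memLp τz).of_le_mul hφ_meas hφ_le
  refine ⟨hφ.toLp φ, Lp.ext ?_, ?_⟩
  · have hψ := (measurePreserving_sub_right volume ((n : ℝ) * g)).quasiMeasurePreserving.ae_eq
      hφ.coeFn_toLp
    have hτz' := (measurePreserving_sub_right volume ((n : ℝ) * g)).quasiMeasurePreserving.ae hτz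
    filter_upwards [hT.pow_ae_eq n (hφ.toLp φ), hψ, hτz', hz] with x hTx hψx hτx hzx
    simp only [Function.comp_apply, sub_add_cancel] at hψx hτx
    rw [hTx, hψx]
    simp only [φ, sub_add_cancel, hτx]
    by_cases hx : x ∈ S
    · have hW : (weightProd w g n x : ℂ) ≠ 0 := by exact_mod_cast (hL.trans_le (hLW x hx)).ne'
      push_cast
      rw [← mul_assoc, mul_inv_cancel₀ hW, one_mul]
    · simp [hzx hx]
  · rw [← hτz_norm]
    refine Lp.norm_le_mul_norm_of_ae_le_mul ?_
    filter_upwards [hφ.coeFn_toLp, hφ_le] with y hy hyle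
    rwa [hy]

theorem isConvexCyclic_of_weightProd_bounds (hT : IsWeightedTranslation T g w) (hp : p ≠ ∞)
    (hw : Measurable w)
    (hbound : ∀ M : ℝ, ∃ (N : ℕ → ℕ) (l L B : ℕ → ℝ), (∀ k, 0 < l k) ∧ (∀ k, 0 < L k) ∧
      Tendsto l atTop (𝓝 0) ∧ Tendsto (fun k => (l k * L k)⁻¹) atTop (𝓝 0) ∧
      Tendsto (fun k => l k * B k) atTop (𝓝 0) ∧
      (∀ k, ∀ x ∈ Icc (-M) M, L k ≤ weightProd w g (N k) x) ∧
      (∀ k x, x - N k * g ∈ Icc (-M) M → |weightProd w g (N k) x| ≤ B k)) :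
    IsConvexCyclic T := by
  have : Fact (p ≠ ∞) := ⟨hp⟩
  refine IsConvexCyclic.of_criterion T (dense_setOf_ae_eq_zero_of_notMem_Icc hp)
    fun u ⟨Mu, hu⟩ v ⟨Mv, hv⟩ => ?_
  set M := max Mu Mv
  have hu' : ∀ᵐ x, x ∉ Icc (-M) M → u x = 0 := hu.mono fun x h hx =>
    h fun h' => hx (Icc_subset_Icc (by simp [M]) (le_max_left _ _) h')
  have hv' : ∀ᵐ x, x ∉ Icc (-M) M → v x = 0 := hv.mono fun x h hx =>
    h fun h' => hx (Icc_subset_Icc (by simp [M]) (le_max_right _ _) h')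
  have hz : ∀ᵐ x, x ∉ Icc (-M) M → (v - u : Lp ℂ p volume) x = 0 := by
    filter_upwards [Lp.coeFn_sub v u, hu', hv'] with x hx hux hvx hxM
    rw [hx, Pi.sub_apply, hux hxM, hvx hxM, sub_zero]
  obtain ⟨N, l, L, B, hl, hL, hl_lim, hlL_lim, hlB_lim, hLW, hWB⟩ := hbound M
  choose ψ hψ hψ_norm using fun k => hT.exists_pow_eq hw (N k) hz (hL k) (hLW k)
  refine ⟨N, l, fun k => (l k)⁻¹ • ψ k, fun k => (hl k).le, hl_lim, ?_, ?_, fun k => ?_⟩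
  · refine squeeze_zero_norm (fun k => ?_) (by simpa using hlL_lim.mul_const ‖v - u‖)
    rw [norm_smul, norm_inv, Real.norm_of_nonneg (hl k).le]
    exact (mul_le_mul_of_nonneg_left (hψ_norm k) (inv_nonneg.2 (hl k).le)).trans_eq (by ring)
  · refine squeeze_zero_norm (fun k => ?_) (by simpa using hlB_lim.mul_const ‖u‖)
    rw [norm_smul, Real.norm_of_nonneg (hl k).le, mul_assoc]
    exact mul_le_mul_of_nonneg_left (hT.norm_pow_le (N k) hu' (hWB k)) (hl k).le
  · rw [ContinuousLinearMap.map_smul_of_tower, hψ, smul_inv_smul₀ (hl k).ne']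

theorem isConvexCyclic (hT : IsWeightedTranslation T g w) (hp : p ≠ ∞) (hg : g < 0)
    (hw : Measurable w) {c C R s t : ℝ} (hc : 0 < c) (hcw : ∀ x, c ≤ w x) (hwC : ∀ x, w x ≤ C)
    (hwt : ∀ x, R ≤ x → t ≤ w x) (hws : ∀ x, x ≤ -R → w x ≤ s) (ht : 1 < t) (hst : s < t) :
    IsConvexCyclic T := by
  have hs0 : 0 < s := hc.trans_le ((hcw _).trans (hws (-R) le_rfl))
  obtain ⟨ρ, hρ1, hsρ, hρt⟩ : ∃ ρ, 1 < ρ ∧ s < ρ ∧ ρ < t :=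
    ⟨(max s 1 + t) / 2, by linarith [le_max_right s 1, max_lt hst ht],
      by linarith [le_max_left s 1, max_lt hst ht], by linarith [max_lt hst ht]⟩
  have ht0 : 0 < t := by linarith
  have hρ0 : 0 < ρ := by linarith
  have geom (A r : ℝ) (h0 : 0 ≤ r) (h1 : r < 1) :
      Tendsto (fun m : ℕ => A * r ^ m) atTop (𝓝 0) := by
    simpa using (tendsto_pow_atTop_nhds_zero_of_lt_one h0 h1).const_mul A
  refine hT.isConvexCyclic_of_weightProd_bounds hp hw fun M => ?_
  obtain ⟨K, hK⟩ := exists_nat_ge ((M + R) / -g)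
  rw [div_le_iff₀ (neg_pos.2 hg)] at hK
  refine ⟨fun m => K + m, fun m => (ρ ^ (K + m))⁻¹, fun m => c ^ K * t ^ m,
    fun m => s ^ m * C ^ K, fun m => by positivity, fun m => by positivity, ?_, ?_, ?_,
    fun m x hx => ?_, fun m x hx => ?_⟩
  · refine (geom (ρ ^ K)⁻¹ ρ⁻¹ (by positivity) (inv_lt_one_of_one_lt₀ hρ1)).congr fun m => ?_
    rw [pow_add, mul_inv, inv_pow]
  · refine (geom (ρ ^ K / c ^ K) (ρ / t) (by positivity)
      ((div_lt_one (by positivity)).2 hρt)).congr fun m => ?_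
    simp only [div_pow, pow_add]
    field_simp
  · refine (geom (C ^ K / ρ ^ K) (s / ρ) (by positivity)
      ((div_lt_one (by positivity)).2 hsρ)).congr fun m => ?_
    simp only [div_pow, pow_add]
    field_simp
  · refine pow_mul_pow_le_prod_range_add hc.le (by linarith) (fun k _ => hcw _)
      fun k _ => hwt _ ?_
    have : (K : ℝ) * -g ≤ ((K + k : ℕ) : ℝ) * -g :=
      mul_le_mul_of_nonneg_right (by simp) (neg_nonneg.2 hg.le)
    linarith [hx.1]
  · have hW_nonneg : ∀ k, 0 ≤ w k := fun k => hc.le.trans (hcw k)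
    rw [weightProd, abs_of_nonneg (Finset.prod_nonneg fun k _ => hW_nonneg _)]
    refine prod_range_add_le_pow_mul_pow (fun k => hW_nonneg _) (fun k hk => hws _ ?_)
      fun k _ => hwC _
    have hkm : (k : ℝ) + 1 ≤ m := by exact_mod_cast hk
    have : ((K + m : ℕ) - k : ℝ) * g ≤ K * g :=
      mul_le_mul_of_nonpos_right (by push_cast; linarith) hg.le
    linarith [hx.2]

end IsWeightedTranslation

/-- Example 2.5 of the paper. Let `g < 0`, `1 < s < t`, and let
`w : ℝ → (0,∞)` be `t` on `[1,∞)`, `-x/2 + 1` on `(-1,1)` and `s` on `(-∞,-1]`. Then the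
weighted translation `(T_{g,w} f)(x) = w(x) f(x - g)` on `L^p(ℝ)` is convex-cyclic. -/
theorem stmt_11 (p : ℝ≥0∞) [Fact (1 ≤ p)] (hp : p ≠ ∞)
    (g : ℝ) (hg : g < 0) (s t : ℝ) (hs : 1 < s) (hst : s < t)
    (w : ℝ → ℝ)
    (hw : ∀ x : ℝ, w x = if 1 ≤ x then t else if x ≤ -1 then s else -x / 2 + 1)
    (T : Lp ℂ p (volume : Measure ℝ) →L[ℂ] Lp ℂ p (volume : Measure ℝ))
    (hT : ∀ f : Lp ℂ p (volume : Measure ℝ),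
      (T f : ℝ → ℂ) =ᵐ[volume] fun x => (w x : ℂ) * f (x - g)) :
    ∃ f : Lp ℂ p (volume : Measure ℝ),
      Dense (convexHull ℝ (Set.range fun n : ℕ => (T ^ n) f)) := by
  have hw_meas : Measurable w := by
    rw [funext hw]
    exact Measurable.ite (measurableSet_le measurable_const measurable_id) measurable_const <|
      Measurable.ite (measurableSet_le measurable_id measurable_const) measurable_const
        (by fun_prop)
  refine IsWeightedTranslation.isConvexCyclic hT hp hg hw_meas (c := 1 / 2) (C := t + 1) (R := 1)
    (by norm_num) (fun x => ?_) (fun x => ?_) (fun x hx => ?_) (fun x hx => ?_)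
    (hs.trans hst) hst <;> rw [hw x] <;> split_ifs <;> linarith
end

section
/- Let 1 ≤ p < ∞ and let T be the bounded linear operator on ℓ^p(ℤ) defined by (T f)(i) = w(i+1) f(i+1), where w(i) = 2 for i ≥ 1 and w(i) = 1 for i ≤ 0 (i.e. T is the weighted translation T_{g, w ∗ δ_g} on ℓ^p(ℤ) with g = −1). Then T is convex-cyclic. -/
open scoped ENNReal

/-!
By Hahn–Banach, the convex hull of an orbit is dense as soon as every nonzero real functional `φ`
is unbounded above along the orbit. On the unit vectors `e_j`,
`T ^ n e_j = 2 ^ #{l ∈ (j - n, j] | 1 ≤ l} • e_(j - n)`, and we take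
`f = ∑ k, 2 ^ (-k²) • I ^ k • e_(k³)`. A nonzero `φ` is positive on some `I ^ m • e_i`. For large
`k ≡ m (mod 4)` and `n = k³ - i`, the `k`-th block of `T ^ n f` is
`2 ^ (k³ - k² - max i 0) • I ^ m • e_i`, which beats all other blocks together by an arbitrarily
large factor: the earlier blocks carry at most `2 ^ (k - 1)³`, the later ones are damped by
`2 ^ (-(k + 1)²)`. Hence `φ (T ^ n f)` is unbounded.
-/

section Separation

variable {E : Type*} [TopologicalSpace E] [AddCommGroup E] [IsTopologicalAddGroup E]
  [Module ℝ E] [ContinuousSMul ℝ E] [LocallyConvexSpace ℝ E]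

theorem dense_convexHull_of_forall_not_bddAbove {S : Set E} (hS : S.Nonempty)
    (h : ∀ φ : StrongDual ℝ E, φ ≠ 0 → ¬BddAbove (φ '' S)) : Dense (convexHull ℝ S) := by
  by_contra hd
  obtain ⟨x, hx⟩ := not_forall.mp hd
  obtain ⟨φ, u, hSu, hux⟩ :=
    geometric_hahn_banach_closed_point (convex_convexHull ℝ S).closure isClosed_closure hx
  have hφS : ∀ a ∈ S, φ a < u := fun a ha => hSu a (subset_closure (subset_convexHull ℝ S ha))
  refine h φ ?_ ⟨u, Set.forall_mem_image.2 fun a ha => (hφS a ha).le⟩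
  rintro rfl
  obtain ⟨a, ha⟩ := hS
  have := hφS a ha
  simp only [zero_apply] at this hux
  linarith

end Separation

section ComplexFunctional

variable {E : Type*} [AddCommGroup E] [Module ℂ E]

theorem LinearMap.apply_complex_smul (φ : E →ₗ[ℝ] ℝ) (c : ℂ) (v : E) :
    φ (c • v) = c.re * φ v + c.im * φ (Complex.I • v) := by
  conv_lhs => rw [← Complex.re_add_im c, add_smul, mul_smul]
  rw [map_add, Complex.coe_smul, Complex.coe_smul, map_smul, map_smul, smul_eq_mul, smul_eq_mul]

theorem LinearMap.apply_smul_eq_zero_of_forall_I_pow_smul_nonpos (φ : E →ₗ[ℝ] ℝ) {v : E}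
    (h : ∀ m : ℕ, φ (Complex.I ^ m • v) ≤ 0) (c : ℂ) : φ (c • v) = 0 := by
  have h0 := h 0
  have h1 := h 1
  have h2 := h 2
  have h3 := h 3
  simp only [pow_zero, pow_one, Complex.I_sq, neg_smul, one_smul, map_neg] at h0 h1 h2
  rw [pow_succ, Complex.I_sq, neg_one_mul, neg_smul, map_neg] at h3
  rw [φ.apply_complex_smul, le_antisymm h0 (neg_nonpos.1 h2), le_antisymm h1 (neg_nonpos.1 h3)]
  ring

end ComplexFunctional

theorem lp.exists_pos_apply_I_pow_smul_single {ι : Type*} [DecidableEq ι] {p : ℝ≥0∞}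
    [Fact (1 ≤ p)] (hp : p ≠ ∞) {φ : StrongDual ℝ (lp (fun _ : ι => ℂ) p)} (hφ : φ ≠ 0) :
    ∃ (i : ι) (m : ℕ), 0 < φ (Complex.I ^ m • lp.single (E := fun _ : ι => ℂ) p i 1) := by
  by_contra! h
  refine hφ (lp.ext_continuousLinearMap hp fun i => ContinuousLinearMap.ext fun c => ?_)
  have hc : lp.single (E := fun _ : ι => ℂ) p i c = c • lp.single p i 1 := by
    rw [← lp.single_smul, smul_eq_mul, mul_one]
  simp only [ContinuousLinearMap.comp_apply, lp.singleContinuousLinearMap_apply, hc,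
    ContinuousLinearMap.zero_comp, zero_apply]
  exact (φ : lp (fun _ : ι => ℂ) p →ₗ[ℝ] ℝ).apply_smul_eq_zero_of_forall_I_pow_smul_nonpos (h i) c

section WeightedShift

variable {p : ℝ≥0∞} [Fact (1 ≤ p)] {w : ℤ → ℝ}
  {T : lp (fun _ : ℤ => ℂ) p →L[ℂ] lp (fun _ : ℤ => ℂ) p}

theorem apply_single_of_weighted_shift
    (hT : ∀ (f : lp (fun _ : ℤ => ℂ) p) (i : ℤ), (T f : ℤ → ℂ) i = (w (i + 1) : ℂ) * f (i + 1))
    (j : ℤ) : T (lp.single p j 1) = w j • lp.single p (j - 1) 1 := by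
  ext i
  rw [hT, lp.coeFn_smul, Pi.smul_apply, lp.single_apply, lp.single_apply]
  by_cases hi : i = j - 1
  · subst hi
    simp [Complex.real_smul]
  · rw [Pi.single_eq_of_ne (by omega), Pi.single_eq_of_ne hi]
    simp

/-- `#{l ∈ (j - n, j] | 1 ≤ l}`: the number of weights `2` that `T ^ n` picks up on `e_j`. -/
def weightExponent (j : ℤ) (n : ℕ) : ℤ := max j 0 - max (j - n) 0

theorem weightExponent_succ (j : ℤ) (n : ℕ) :
    weightExponent j (n + 1) = (if 1 ≤ j then 1 else 0) + weightExponent (j - 1) n := by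
  unfold weightExponent
  split_ifs <;> omega

theorem pow_apply_single (hw : ∀ i : ℤ, w i = if 1 ≤ i then 2 else 1)
    (hT : ∀ (f : lp (fun _ : ℤ => ℂ) p) (i : ℤ), (T f : ℤ → ℂ) i = (w (i + 1) : ℂ) * f (i + 1))
    (n : ℕ) (j : ℤ) :
    (T ^ n) (lp.single p j 1) = (2 : ℝ) ^ weightExponent j n • lp.single p (j - n) 1 := by
  induction n generalizing j with
  | zero => simp [weightExponent]
  | succ n ih =>
    rw [pow_succ, mul_apply_eq_comp, apply_single_of_weighted_shift hT,
      ContinuousLinearMap.map_smul_of_tower, ih, smul_smul, hw, weightExponent_succ,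
      Nat.cast_succ, sub_sub, add_comm 1 (n : ℤ)]
    split_ifs
    · rw [zpow_one_add₀ two_ne_zero]
    · rw [zero_add, one_mul]

end WeightedShift

theorem HasSum.sub_two_mul_le_of_abs_le_geometric {t : ℕ → ℝ} {s A : ℝ} (hs : HasSum t s)
    {k₀ : ℕ} (ht : ∀ k ≠ k₀, |t k| ≤ A * (1 / 2) ^ k) : t k₀ - 2 * A ≤ s := by
  have hA : 0 ≤ A := by
    have := (abs_nonneg _).trans (ht (k₀ + 1) (by omega))
    exact nonneg_of_mul_nonneg_left this (by positivity)
  have hbound : ∀ k, -(A * (1 / 2) ^ k) ≤ Function.update t k₀ 0 k := by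
    intro k
    rcases eq_or_ne k k₀ with rfl | hk
    · simp only [Function.update_self, Left.neg_nonpos_iff]; positivity
    · rw [Function.update_of_ne hk]; exact neg_le_of_abs_le (ht k hk)
  have := hasSum_le hbound (hasSum_geometric_two.mul_left A).neg (hs.update k₀ 0)
  linarith

section Exponents

variable {i₀ D : ℤ} {k₀ : ℕ}

theorem sub_one_le_cube_sub_sq {K : ℤ} (hK : 0 ≤ K) : K - 1 ≤ K ^ 3 - K ^ 2 := by
  nlinarith [mul_nonneg (sq_nonneg (K - 1)) (by linarith : 0 ≤ K + 1)]

theorem le_cube_of_abs_add_one_le (hk₀ : |i₀| + 1 ≤ k₀) : i₀ ≤ (k₀ : ℤ) ^ 3 := by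
  have := sub_one_le_cube_sub_sq (Int.natCast_nonneg k₀)
  nlinarith [le_abs_self i₀, sq_nonneg (k₀ : ℤ)]

theorem le_cube_sub_sq_sub_max (hk₀ : D + |i₀| + 1 ≤ k₀) :
    D ≤ (k₀ : ℤ) ^ 3 - k₀ ^ 2 - max i₀ 0 := by
  have := sub_one_le_cube_sub_sq (Int.natCast_nonneg k₀)
  have : max i₀ 0 ≤ |i₀| := max_le (le_abs_self _) (abs_nonneg _)
  linarith

theorem weightExponent_cube_sub_sq (hk₀ : |i₀| + 1 ≤ k₀) :
    weightExponent ((k₀ : ℤ) ^ 3) ((k₀ : ℤ) ^ 3 - i₀).toNat - (k₀ : ℤ) ^ 2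
      = (k₀ : ℤ) ^ 3 - k₀ ^ 2 - max i₀ 0 := by
  have := le_cube_of_abs_add_one_le hk₀
  have : 0 ≤ (k₀ : ℤ) ^ 3 := by positivity
  unfold weightExponent
  omega

theorem weightExponent_cube_sub_sq_le {k : ℕ} (hk₀ : D + |i₀| + 1 ≤ k₀) (hk : k ≠ k₀) :
    weightExponent ((k : ℤ) ^ 3) ((k₀ : ℤ) ^ 3 - i₀).toNat - (k : ℤ) ^ 2
      ≤ (k₀ : ℤ) ^ 3 - k₀ ^ 2 - max i₀ 0 - D - k := by
  have hcube := sub_one_le_cube_sub_sq (Int.natCast_nonneg k₀)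
  have := le_abs_self i₀
  have := neg_abs_le i₀
  have : (0 : ℤ) ≤ k ^ 3 := by positivity
  unfold weightExponent
  rcases Nat.lt_or_gt_of_ne hk with hlt | hgt
  · -- the earlier block `k` has at most its position `k³ ≤ (k₀ - 1)³` as exponent
    have hlt : (k : ℤ) ≤ k₀ - 1 := by omega
    have : (k : ℤ) ^ 3 - k ^ 2 + k ≤ (k₀ - 1) ^ 3 := by
      nlinarith [pow_le_pow_left₀ (Int.natCast_nonneg k) hlt 3]
    have : (k₀ - 1 : ℤ) ^ 3 = k₀ ^ 3 - 3 * k₀ ^ 2 + 3 * k₀ - 1 := by ring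
    have : 2 * (k₀ : ℤ) - 1 ≤ k₀ ^ 2 := by nlinarith [sq_nonneg ((k₀ : ℤ) - 1)]
    omega
  · -- the later block `k` gains at most `2 ^ n` but is damped by `2 ^ (-k²)`
    have : (k₀ : ℤ) ^ 2 + k₀ ≤ (k : ℤ) ^ 2 - k := by nlinarith
    have : (0 : ℤ) ≤ k₀ ^ 2 := by positivity
    omega

end Exponents

section ConvexCyclicVector

variable (p : ℝ≥0∞) [Fact (1 ≤ p)]

theorem norm_I_pow_smul_single (k : ℕ) (j : ℤ) :
    ‖Complex.I ^ k • lp.single (E := fun _ : ℤ => ℂ) p j 1‖ = 1 := by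
  rw [norm_smul, norm_pow, Complex.norm_I, one_pow, one_mul,
    lp.norm_single (zero_lt_one.trans_le Fact.out), norm_one]

/-- Blocks of size `2 ^ (-k²)` at the sparse positions `k³`; the phases `I ^ k` run through the
four complex units infinitely often. -/
noncomputable def blockSummand (k : ℕ) : lp (fun _ : ℤ => ℂ) p :=
  (2 : ℝ) ^ (-(k : ℤ) ^ 2) • (Complex.I ^ k • lp.single p ((k : ℤ) ^ 3) 1)

theorem summable_blockSummand : Summable (blockSummand p) := by
  refine Summable.of_norm_bounded summable_geometric_two fun k => ?_
  rw [blockSummand, norm_smul, norm_I_pow_smul_single, mul_one,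
    Real.norm_of_nonneg (by positivity), one_div, inv_pow, ← zpow_natCast, ← zpow_neg]
  exact zpow_le_zpow_right₀ one_le_two (by nlinarith)

noncomputable def convexCyclicVector : lp (fun _ : ℤ => ℂ) p := ∑' k, blockSummand p k

variable {p}

noncomputable def blockTerm (φ : StrongDual ℝ (lp (fun _ : ℤ => ℂ) p)) (n k : ℕ) : ℝ :=
  (2 : ℝ) ^ (weightExponent ((k : ℤ) ^ 3) n - (k : ℤ) ^ 2) *
    φ (Complex.I ^ k • lp.single p ((k : ℤ) ^ 3 - n) 1)

theorem abs_blockTerm_le (φ : StrongDual ℝ (lp (fun _ : ℤ => ℂ) p)) (n k : ℕ) :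
    |blockTerm φ n k| ≤ ‖φ‖ * 2 ^ (weightExponent ((k : ℤ) ^ 3) n - (k : ℤ) ^ 2) := by
  have hφ := φ.le_opNorm (Complex.I ^ k • lp.single p ((k : ℤ) ^ 3 - n) 1)
  rw [norm_I_pow_smul_single, mul_one, Real.norm_eq_abs] at hφ
  rw [blockTerm, abs_mul, abs_of_pos (by positivity), mul_comm]
  exact mul_le_mul_of_nonneg_right hφ (by positivity)

variable {w : ℤ → ℝ} {T : lp (fun _ : ℤ => ℂ) p →L[ℂ] lp (fun _ : ℤ => ℂ) p}

theorem hasSum_blockTerm (hw : ∀ i : ℤ, w i = if 1 ≤ i then 2 else 1)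
    (hT : ∀ (f : lp (fun _ : ℤ => ℂ) p) (i : ℤ), (T f : ℤ → ℂ) i = (w (i + 1) : ℂ) * f (i + 1))
    (φ : StrongDual ℝ (lp (fun _ : ℤ => ℂ) p)) (n : ℕ) :
    HasSum (blockTerm φ n) (φ ((T ^ n) (convexCyclicVector p))) := by
  have h : HasSum (fun k => φ ((T ^ n) (blockSummand p k)))
      (φ ((T ^ n) (convexCyclicVector p))) :=
    φ.hasSum ((T ^ n).hasSum (summable_blockSummand p).hasSum)
  convert h using 2 with k
  rw [blockTerm, blockSummand, ContinuousLinearMap.map_smul_of_tower (T ^ n), map_smul (T ^ n),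
    pow_apply_single hw hT, smul_comm (Complex.I ^ k), smul_smul, map_smul φ, smul_eq_mul,
    ← zpow_add₀ two_ne_zero, sub_eq_neg_add]

theorem exists_lt_apply_pow_apply_convexCyclicVector
    (hw : ∀ i : ℤ, w i = if 1 ≤ i then 2 else 1)
    (hT : ∀ (f : lp (fun _ : ℤ => ℂ) p) (i : ℤ), (T f : ℤ → ℂ) i = (w (i + 1) : ℂ) * f (i + 1))
    {φ : StrongDual ℝ (lp (fun _ : ℤ => ℂ) p)} {i₀ : ℤ} {m : ℕ}
    (hρ : 0 < φ (Complex.I ^ m • lp.single p i₀ 1)) (b : ℝ) :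
    ∃ n : ℕ, b < φ ((T ^ n) (convexCyclicVector p)) := by
  set ρ := φ (Complex.I ^ m • lp.single p i₀ 1)
  obtain ⟨D, hD⟩ := pow_unbounded_of_one_lt ((2 * ‖φ‖ + |b|) / ρ) one_lt_two
  rw [div_lt_iff₀ hρ] at hD
  -- the block `k₀` carries the phase `I ^ m` and is far enough out to dominate all the others
  set k₀ := 4 * (D + i₀.natAbs + 1) + m
  have hk₀ : (D : ℤ) + |i₀| + 1 ≤ k₀ := by rw [Int.abs_eq_natAbs]; omega
  have hphase : Complex.I ^ k₀ = Complex.I ^ m := by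
    rw [pow_add, pow_mul, Complex.I_pow_four, one_pow, one_mul]
  set n := ((k₀ : ℤ) ^ 3 - i₀).toNat
  have hn : (k₀ : ℤ) ^ 3 - n = i₀ := by
    rw [Int.toNat_of_nonneg (sub_nonneg.2 (le_cube_of_abs_add_one_le (by linarith))),
      sub_sub_cancel]
  set E := (k₀ : ℤ) ^ 3 - k₀ ^ 2 - max i₀ 0
  have hmain : blockTerm φ n k₀ = 2 ^ E * ρ := by
    rw [blockTerm, weightExponent_cube_sub_sq (by linarith), hn, hphase]
  have htail (k : ℕ) (hk : k ≠ k₀) : |blockTerm φ n k| ≤ ‖φ‖ * 2 ^ (E - D) * (1 / 2) ^ k :=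
    calc |blockTerm φ n k| ≤ ‖φ‖ * 2 ^ (E - D - k) := (abs_blockTerm_le φ n k).trans <|
          mul_le_mul_of_nonneg_left
            (zpow_le_zpow_right₀ one_le_two (weightExponent_cube_sub_sq_le hk₀ hk)) (norm_nonneg φ)
      _ = ‖φ‖ * 2 ^ (E - D) * (1 / 2) ^ k := by
          rw [zpow_sub₀ two_ne_zero, zpow_natCast, one_div, inv_pow]; ring
  have hbound := (hasSum_blockTerm hw hT φ n).sub_two_mul_le_of_abs_le_geometric htail
  have hED : (1 : ℝ) ≤ 2 ^ (E - D) :=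
    one_le_zpow₀ one_le_two (sub_nonneg.2 (le_cube_sub_sq_sub_max hk₀))
  have hE : (2 : ℝ) ^ E = 2 ^ (E - D) * 2 ^ D := by
    rw [← zpow_natCast, ← zpow_add₀ two_ne_zero, sub_add_cancel]
  refine ⟨n, ?_⟩
  calc b ≤ |b| := le_abs_self b
    _ < 2 ^ D * ρ - 2 * ‖φ‖ := by linarith
    _ ≤ 2 ^ (E - D) * (2 ^ D * ρ - 2 * ‖φ‖) :=
        le_mul_of_one_le_left (by linarith [abs_nonneg b]) hED
    _ = 2 ^ E * ρ - 2 * (‖φ‖ * 2 ^ (E - D)) := by rw [hE]; ring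
    _ ≤ _ := hmain ▸ hbound

end ConvexCyclicVector

/-- Example 2.6 of the paper. The operator `(T f)(i) = w(i+1) f(i+1)`
on `ℓ^p(ℤ)`, where `w(i) = 2` for `i ≥ 1` and `w(i) = 1` for `i ≤ 0`, is convex-cyclic. -/
theorem stmt_12 (p : ℝ≥0∞) [Fact (1 ≤ p)] (hp : p ≠ ∞)
    (w : ℤ → ℝ) (hw : ∀ i : ℤ, w i = if 1 ≤ i then 2 else 1)
    (T : lp (fun _ : ℤ => ℂ) p →L[ℂ] lp (fun _ : ℤ => ℂ) p)
    (hT : ∀ (f : lp (fun _ : ℤ => ℂ) p) (i : ℤ), (T f : ℤ → ℂ) i = (w (i + 1) : ℂ) * f (i + 1)) :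
    ∃ f : lp (fun _ : ℤ => ℂ) p,
      Dense (convexHull ℝ (Set.range fun n : ℕ => (T ^ n) f)) := by
  refine ⟨convexCyclicVector p,
    dense_convexHull_of_forall_not_bddAbove (Set.range_nonempty _) fun φ hφ => ?_⟩
  obtain ⟨i₀, m, hρ⟩ := lp.exists_pos_apply_I_pow_smul_single hp hφ
  rw [← Set.range_comp, not_bddAbove_iff]
  intro b
  obtain ⟨n, hn⟩ := exists_lt_apply_pow_apply_convexCyclicVector hw hT hρ b
  exact ⟨_, ⟨n, rfl⟩, hn⟩
end

section
/- Let 1 < p < ∞ and let T be the bounded linear operator on ℓ^p(ℤ) defined by (T f)(i) = w(i+1) f(i+1), where w(i) = 2 for i ≥ 1 and w(i) = 1 for i ≤ 0. Then the point spectrum of the dual operator T^* is empty; equivalently, with 1/p + 1/q = 1, there is no λ ∈ ℂ and no nonzero f ∈ ℓ^q(ℤ) such that T^* f = λ f. -/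
open scoped ENNReal

/-!
For `λ ≠ 0` the eigen-equation `w(m) f(m-1) = λ f(m)` determines `f` from `f(0)`:
`f(n) = (2/λ)^n f(0)` and `f(-n) = λ^n f(0)` for `n ≥ 0`. Every element of `ℓ^q` is bounded,
and `‖2/λ‖ ≤ 1`, `‖λ‖ ≤ 1` cannot hold together, so `f(0) = 0` and hence `f = 0`.
For `λ = 0` the equation forces `f = 0` at once because `w` never vanishes.
-/

lemma eq_pow_mul_of_forall_succ {M : Type*} [Monoid M] {u : ℕ → M} {c : M}
    (h : ∀ n, u (n + 1) = c * u n) (n : ℕ) : u n = c ^ n * u 0 := by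
  induction n with
  | zero => simp
  | succ n ih => rw [h, ih, pow_succ', mul_assoc]

lemma eq_zero_of_bddAbove_norm_pow_mul {𝕜 : Type*} [NormedDivisionRing 𝕜] {c a : 𝕜}
    (hc : 1 < ‖c‖) (h : BddAbove (Set.range fun n : ℕ => ‖c ^ n * a‖)) : a = 0 := by
  by_contra ha
  obtain ⟨C, hC⟩ := h
  obtain ⟨n, hn⟩ := pow_unbounded_of_one_lt (C / ‖a‖) hc
  have hbound : ‖c ^ n * a‖ ≤ C := hC ⟨n, rfl⟩
  rw [norm_mul, norm_pow] at hbound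
  rw [div_lt_iff₀ (norm_pos_iff.mpr ha)] at hn
  linarith

lemma eq_zero_of_bddAbove_of_geometric {𝕜 : Type*} [NormedDivisionRing 𝕜] {f : ℤ → 𝕜}
    {a b : 𝕜} (hf : BddAbove (Set.range fun m => ‖f m‖))
    (ha : ∀ n : ℕ, f (n + 1) = a * f n) (hb : ∀ n : ℕ, f (-(n + 1)) = b * f (-n))
    (hab : 1 < ‖a‖ ∨ 1 < ‖b‖) : f = 0 := by
  have hfwd : ∀ n : ℕ, f n = a ^ n * f 0 :=
    eq_pow_mul_of_forall_succ (u := fun n : ℕ => f n) (by exact_mod_cast ha)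
  have hbwd : ∀ n : ℕ, f (-n) = b ^ n * f 0 :=
    eq_pow_mul_of_forall_succ (u := fun n : ℕ => f (-n)) (by exact_mod_cast hb)
  have hbdd_comp {g : ℕ → ℤ} : BddAbove (Set.range fun n => ‖f (g n)‖) :=
    hf.mono (Set.range_comp_subset_range g fun m => ‖f m‖)
  have h0 : f 0 = 0 := by
    rcases hab with ha | hb
    · exact eq_zero_of_bddAbove_norm_pow_mul ha (by simpa only [hfwd] using hbdd_comp (g := Nat.cast))
    · exact eq_zero_of_bddAbove_norm_pow_mul hb (by simpa only [hbwd] using hbdd_comp (g := fun n => -n))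
  funext m
  rcases Int.eq_nat_or_neg m with ⟨n, rfl | rfl⟩
  · simp [hfwd, h0]
  · simp [hbwd, h0]

theorem stmt_13_general (q : ℝ≥0∞)
    (w : ℤ → ℝ) (hw : ∀ i : ℤ, w i = if 1 ≤ i then 2 else 1) :
    ¬ ∃ (l : ℂ) (f : lp (fun _ : ℤ => ℂ) q), f ≠ 0 ∧
      ∀ m : ℤ, (w m : ℂ) * f (m - 1) = l * f m := by
  rintro ⟨l, f, hf0, hf⟩
  have hw_ne (m : ℤ) : (w m : ℂ) ≠ 0 := by rw [hw]; split_ifs <;> norm_num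
  have hl : l ≠ 0 := by
    rintro rfl
    refine hf0 (lp.ext (funext fun m => ?_))
    simpa [hw_ne] using hf (m + 1)
  refine hf0 (lp.ext (eq_zero_of_bddAbove_of_geometric (a := 2 / l) (b := l)
    (memℓp_infty_iff.mp (f.prop.of_exponent_ge le_top)) (fun n => ?_) (fun n => ?_) ?_))
  · have h := hf (n + 1)
    rw [hw, if_pos (by omega), add_sub_cancel_right] at h
    push_cast at h
    field_simp
    linear_combination -h
  · have h := hf (-n)
    rw [hw, if_neg (by omega)] at h
    push_cast at h
    rw [neg_add', ← h, one_mul]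
  · by_contra! h
    obtain ⟨h_div, h_le⟩ := h
    rw [norm_div, div_le_one (norm_pos_iff.mpr hl)] at h_div
    norm_num at h_div
    linarith

/-- Example 2.6 of the paper, point spectrum part. For the operator
`(T f)(i) = w(i+1) f(i+1)` on `ℓ^p(ℤ)` (`1 < p < ∞`), with `w(i) = 2` for `i ≥ 1` and
`w(i) = 1` for `i ≤ 0`, the dual operator `(T^* h)(m) = w(m) h(m-1)` on `ℓ^q(ℤ)`
(where `1/p + 1/q = 1`) has empty point spectrum: there is no `λ ∈ ℂ` and no nonzero
`f ∈ ℓ^q(ℤ)` with `w(m) f(m-1) = λ f(m)` for all `m`. -/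
theorem stmt_13 (p q : ℝ≥0∞) (hp1 : 1 < p) (hp2 : p ≠ ∞) (hpq : 1 / p + 1 / q = 1)
    (w : ℤ → ℝ) (hw : ∀ i : ℤ, w i = if 1 ≤ i then 2 else 1) :
    ¬ ∃ (l : ℂ) (f : lp (fun _ : ℤ => ℂ) q), f ≠ 0 ∧
      ∀ m : ℤ, (w m : ℂ) * f (m - 1) = l * f m :=
  stmt_13_general q w hw
end
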